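/- Let s_1, …, s_{K+1} be exchangeable random variables and let α ∈ (0,1) with ⌈(K+1)(1-α)⌉ ≤ K. Then P(s_{K+1} ≤ Q_{1-α}) ≥ 1 - α, where Q_{1-α} is the ⌈(K+1)(1-α)⌉-th order statistic of (s_1, …, s_K), and moreover if the s_k are almost surely distinct then P(s_{K+1} ≤ Q_{1-α}) ≤ 1 - α + 1/(K+1). -/

import Mathlib

/-!
Let `r k` be the number of scores strictly below `s k`. By exchangeability the events
`r k < j` are equiprobable, so `(K + 1) P(r (K + 1) < j)` is the expected number of indices of
rank below `j`. That number is at least `j` for every outcome (the indices of the `j` smallest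
scores qualify), and at most `j` when the scores are distinct, since ranks are then distinct.
With `j = ⌈(K + 1)(1 - α)⌉`, the event `s (K + 1) ≤ Q` is exactly `r (K + 1) < j`.
-/

open MeasureTheory

/-- The `j`-th smallest value among `v 0, …, v (K-1)` (with `j` counted from 1). -/
noncomputable def orderStat {K : ℕ} (v : Fin K → ℝ) (j : ℕ) : ℝ :=
  (List.insertionSort (· ≤ ·) (List.ofFn v)).getD (j - 1) 0

open Finset

namespace Tuple

variable {α : Type*} [LinearOrder α] {n : ℕ}

def rank (v : Fin n → α) (k : Fin n) : ℕ := #{i | v i < v k}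

theorem card_comp_perm_lt (v : Fin n → α) (σ : Equiv.Perm (Fin n)) (a : α) :
    #{i | v (σ i) < a} = #{i | v i < a} :=
  card_equiv σ (by simp)

theorem rank_comp_perm (v : Fin n → α) (σ : Equiv.Perm (Fin n)) (k : Fin n) :
    rank (v ∘ σ) k = rank v (σ k) :=
  card_comp_perm_lt v σ (v (σ k))

theorem card_lt_le_iff_le_apply_sort (v : Fin n → α) (m : Fin n) (a : α) :
    #{i | v i < a} ≤ m ↔ a ≤ v (sort v m) := by
  rw [← card_comp_perm_lt v (sort v), ← not_lt, ← not_lt]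
  exact not_congr (lt_card_lt_iff_apply_lt_of_monotone (monotone_sort v))

theorem rank_sort_le (v : Fin n → α) (m : Fin n) : rank v (sort v m) ≤ m :=
  (card_lt_le_iff_le_apply_sort v m _).2 le_rfl

theorem le_card_rank_lt (v : Fin n → α) {j : ℕ} (hj : j ≤ n) : j ≤ #{k | rank v k < j} := by
  calc j = #{m : Fin n | (m : ℕ) < j} := by simp [Fin.card_filter_val_lt, hj]
    _ = #(({m : Fin n | (m : ℕ) < j} : Finset _).map (sort v).toEmbedding) := (card_map _).symm
    _ ≤ #{k | rank v k < j} := card_le_card fun k hk => by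
        obtain ⟨m, hm, rfl⟩ := mem_map.1 hk
        simp only [mem_filter, mem_univ, true_and] at hm ⊢
        exact (rank_sort_le v m).trans_lt hm

theorem rank_strictMono {v : Fin n → α} {k k' : Fin n} (h : v k < v k') : rank v k < rank v k' :=
  card_lt_card <| (ssubset_iff_of_subset fun i hi => by simp_all [lt_trans _ h]).2
    ⟨k, by simpa using h, by simp⟩

theorem rank_injective {v : Fin n → α} (hv : Function.Injective v) :
    Function.Injective (rank v) := by
  intro k k' hkk'
  by_contra hne
  rcases (hv.ne hne).lt_or_gt with h | h
  · exact (rank_strictMono h).ne hkk'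
  · exact (rank_strictMono h).ne' hkk'

theorem card_rank_lt_le {v : Fin n → α} (hv : Function.Injective v) (j : ℕ) :
    #{k | rank v k < j} ≤ j := by
  simpa using card_le_card_of_injOn (t := range j) (rank v)
    (fun k hk => by simpa using hk) (rank_injective hv).injOn

theorem rank_last (w : Fin (n + 1) → α) :
    rank w (Fin.last n) = #{i : Fin n | w i.castSucc < w (Fin.last n)} := by
  rw [rank, Fin.univ_castSuccEmb, filter_cons, if_neg (lt_irrefl _), filter_map, card_map]
  rfl

end Tuple

theorem orderStat_eq_sort {K : ℕ} (v : Fin K → ℝ) (m : Fin K) :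
    orderStat v (m + 1) = v (Tuple.sort v m) := by
  have hsort : (List.ofFn v).insertionSort (· ≤ ·) = List.ofFn (v ∘ Tuple.sort v) :=
    List.Perm.eq_of_sortedLE List.sortedLE_insertionSort (Tuple.monotone_sort v).sortedLE_ofFn
      ((List.perm_insertionSort _ _).trans ((Tuple.sort v).ofFn_comp_perm v).symm)
  simp [orderStat, hsort]

theorem le_orderStat_iff {K j : ℕ} (v : Fin K → ℝ) (t : ℝ) (hj : 1 ≤ j) (hjK : j ≤ K) :
    t ≤ orderStat v j ↔ #{i | v i < t} < j := by
  obtain ⟨m, rfl⟩ : ∃ m : Fin K, j = m + 1 := ⟨⟨j - 1, by omega⟩, (Nat.sub_add_cancel hj).symm⟩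
  rw [orderStat_eq_sort, ← Tuple.card_lt_le_iff_le_apply_sort, Nat.lt_succ_iff]

theorem le_orderStat_iff_rank_last_lt {K j : ℕ} (w : Fin (K + 1) → ℝ) (hj : 1 ≤ j) (hjK : j ≤ K) :
    w (Fin.last K) ≤ orderStat (fun k : Fin K => w k.castSucc) j ↔
      Tuple.rank w (Fin.last K) < j := by
  rw [le_orderStat_iff _ _ hj hjK, Tuple.rank_last]

open scoped ENNReal

theorem ENNReal.ofReal_le_of_natCast_le_mul {n j : ℕ} {m : ℝ≥0∞} {r : ℝ} (hn : n ≠ 0)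
    (hr : n * r ≤ j) (h : (j : ℝ≥0∞) ≤ n * m) : ENNReal.ofReal r ≤ m := by
  rw [← ENNReal.mul_le_mul_iff_right (Nat.cast_ne_zero.2 hn) (ENNReal.natCast_ne_top n)]
  calc (n : ℝ≥0∞) * ENNReal.ofReal r = ENNReal.ofReal (n * r) := by
        rw [ENNReal.ofReal_mul n.cast_nonneg, ENNReal.ofReal_natCast]
    _ ≤ ENNReal.ofReal j := ENNReal.ofReal_le_ofReal hr
    _ = j := ENNReal.ofReal_natCast j
    _ ≤ n * m := h

theorem ENNReal.le_ofReal_of_mul_le_natCast {n j : ℕ} {m : ℝ≥0∞} {r : ℝ} (hn : n ≠ 0)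
    (hr : j ≤ n * r) (h : n * m ≤ j) : m ≤ ENNReal.ofReal r := by
  rw [← ENNReal.mul_le_mul_iff_right (Nat.cast_ne_zero.2 hn) (ENNReal.natCast_ne_top n)]
  calc (n : ℝ≥0∞) * m ≤ j := h
    _ = ENNReal.ofReal j := (ENNReal.ofReal_natCast j).symm
    _ ≤ ENNReal.ofReal (n * r) := ENNReal.ofReal_le_ofReal hr
    _ = n * ENNReal.ofReal r := by
        rw [ENNReal.ofReal_mul n.cast_nonneg, ENNReal.ofReal_natCast]

theorem MeasureTheory.sum_measure_eq_lintegral_card {Ω ι : Type*} [MeasurableSpace Ω] [Fintype ι]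
    (μ : Measure Ω) {p : ι → Ω → Prop} [∀ i ω, Decidable (p i ω)]
    (hp : ∀ i, MeasurableSet {ω | p i ω}) :
    ∑ i, μ {ω | p i ω} = ∫⁻ ω, (#{i | p i ω} : ℝ≥0∞) ∂μ := by
  simp_rw [← lintegral_indicator_one (hp _)]
  rw [← lintegral_finsetSum _ fun i _ => measurable_one.indicator (hp i)]
  congr with ω
  simp [Set.indicator_apply]

def Exchangeable {Ω α : Type*} [MeasurableSpace Ω] [MeasurableSpace α] {n : ℕ} (μ : Measure Ω)
    (X : Ω → Fin n → α) : Prop :=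
  ∀ π : Equiv.Perm (Fin n), μ.map (fun ω => X ω ∘ π) = μ.map X

namespace Tuple

variable {α : Type*} [LinearOrder α] [TopologicalSpace α] [OrderClosedTopology α]
  [SecondCountableTopology α] [MeasurableSpace α] [OpensMeasurableSpace α] {n : ℕ}

theorem measurable_rank (k : Fin n) : Measurable fun v : Fin n → α => rank v k := by
  simp_rw [rank, card_filter]
  exact Finset.measurable_sum _ fun i _ => Measurable.ite
    (measurableSet_lt (measurable_pi_apply i) (measurable_pi_apply k)) measurable_const
    measurable_const

variable {Ω : Type*} [MeasurableSpace Ω] {μ : Measure Ω} {X : Ω → Fin n → α}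

theorem measure_rank_lt_eq (hX : Measurable X)
    (hexch : Exchangeable μ X)
    (j : ℕ) (k k' : Fin n) :
    μ {ω | rank (X ω) k < j} = μ {ω | rank (X ω) k' < j} := by
  set π := Equiv.swap k k'
  have hXπ : Measurable fun ω => X ω ∘ π :=
    (measurable_pi_lambda _ fun i => measurable_pi_apply (π i)).comp hX
  have hC : MeasurableSet {v : Fin n → α | rank v k' < j} :=
    measurableSet_lt (measurable_rank k') measurable_const
  calc μ {ω | rank (X ω) k < j} = μ ((fun ω => X ω ∘ π) ⁻¹' {v | rank v k' < j}) := by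
        simp [π, rank_comp_perm]
    _ = μ.map X {v | rank v k' < j} := by rw [← Measure.map_apply hXπ hC, hexch π]
    _ = μ {ω | rank (X ω) k' < j} := Measure.map_apply hX hC

theorem card_mul_measure_rank_lt (hX : Measurable X)
    (hexch : Exchangeable μ X) (j : ℕ) (k : Fin n) :
    n * μ {ω | rank (X ω) k < j} = ∫⁻ ω, (#{k | rank (X ω) k < j} : ℝ≥0∞) ∂μ := by
  rw [← sum_measure_eq_lintegral_card μ (p := fun k ω => rank (X ω) k < j)
      fun k => measurableSet_lt ((measurable_rank k).comp hX) measurable_const,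
    sum_congr rfl fun k' _ => measure_rank_lt_eq hX hexch j k' k]
  simp

variable [IsProbabilityMeasure μ]

theorem natCast_le_card_mul_measure_rank_lt (hX : Measurable X)
    (hexch : Exchangeable μ X)
    {j : ℕ} (hj : j ≤ n) (k : Fin n) :
    (j : ℝ≥0∞) ≤ n * μ {ω | rank (X ω) k < j} := by
  rw [card_mul_measure_rank_lt hX hexch]
  calc (j : ℝ≥0∞) = ∫⁻ _, (j : ℝ≥0∞) ∂μ := by simp
    _ ≤ _ := lintegral_mono fun ω => Nat.cast_le.2 (le_card_rank_lt (X ω) hj)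

theorem card_mul_measure_rank_lt_le (hX : Measurable X)
    (hexch : Exchangeable μ X)
    (hinj : ∀ᵐ ω ∂μ, Function.Injective (X ω)) (j : ℕ) (k : Fin n) :
    n * μ {ω | rank (X ω) k < j} ≤ j := by
  rw [card_mul_measure_rank_lt hX hexch]
  calc _ ≤ ∫⁻ _, (j : ℝ≥0∞) ∂μ :=
        lintegral_mono_ae (hinj.mono fun _ hω => Nat.cast_le.2 (card_rank_lt_le hω j))
    _ = j := by simp

end Tuple

/-- Two-sided split conformal coverage: for exchangeable scores `s 0, …, s K` with
`⌈(K+1)(1-α)⌉ ≤ K`, letting `Q` be the `⌈(K+1)(1-α)⌉`-th order statistic of the first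
`K` scores, one has `P(s K ≤ Q) ≥ 1 - α`, and if moreover the scores are almost surely
distinct then `P(s K ≤ Q) ≤ 1 - α + 1/(K+1)`. -/
theorem split_conformal_two_sided
    {Ω : Type*} [MeasurableSpace Ω] (μ : Measure Ω) [IsProbabilityMeasure μ]
    (K : ℕ) (s : Fin (K + 1) → Ω → ℝ) (hs : ∀ k, Measurable (s k))
    (hexch : ∀ π : Equiv.Perm (Fin (K + 1)),
      Measure.map (fun ω => fun k => s (π k) ω) μ
        = Measure.map (fun ω => fun k => s k ω) μ)
    (α : ℝ) (hα : α ∈ Set.Ioo (0 : ℝ) 1)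
    (hK : ⌈((K : ℝ) + 1) * (1 - α)⌉ ≤ (K : ℤ)) :
    ENNReal.ofReal (1 - α) ≤
        μ {ω | s (Fin.last K) ω ≤
          orderStat (fun k : Fin K => s k.castSucc ω) ⌈((K : ℝ) + 1) * (1 - α)⌉.toNat} ∧
      (μ {ω | ∃ i j : Fin (K + 1), i ≠ j ∧ s i ω = s j ω} = 0 →
        μ {ω | s (Fin.last K) ω ≤
            orderStat (fun k : Fin K => s k.castSucc ω) ⌈((K : ℝ) + 1) * (1 - α)⌉.toNat}
          ≤ ENNReal.ofReal (1 - α + 1 / ((K : ℝ) + 1))) := by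
  set j := ⌈((K : ℝ) + 1) * (1 - α)⌉.toNat
  have hceil_pos : 0 < ⌈((K : ℝ) + 1) * (1 - α)⌉ :=
    Int.ceil_pos.2 (mul_pos (by positivity) (sub_pos.2 hα.2))
  have hjK : j ≤ K := by omega
  have hj : (j : ℝ) = ⌈((K : ℝ) + 1) * (1 - α)⌉ := by
    rw [← Int.toNat_of_nonneg hceil_pos.le, Int.cast_natCast]
  set X : Ω → Fin (K + 1) → ℝ := fun ω k => s k ω
  have hX : Measurable X := measurable_pi_lambda _ hs
  have hevent : {ω | s (Fin.last K) ω ≤ orderStat (fun k : Fin K => s k.castSucc ω) j} =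
      {ω | Tuple.rank (X ω) (Fin.last K) < j} :=
    Set.ext fun ω => le_orderStat_iff_rank_last_lt (X ω) (by omega) hjK
  rw [hevent]
  refine ⟨ENNReal.ofReal_le_of_natCast_le_mul K.succ_ne_zero ?_
      (Tuple.natCast_le_card_mul_measure_rank_lt hX hexch (by omega) _), fun hties =>
    ENNReal.le_ofReal_of_mul_le_natCast K.succ_ne_zero ?_
      (Tuple.card_mul_measure_rank_lt_le hX hexch ?_ j _)⟩
  · push_cast
    rw [hj]
    exact Int.le_ceil _
  · push_cast
    rw [mul_add, mul_one_div_cancel (by positivity), hj]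
    exact (Int.ceil_lt_add_one _).le
  · refine ae_iff.2 (measure_mono_null (fun ω hω => ?_) hties)
    obtain ⟨i, i', hii', hne⟩ := Function.not_injective_iff.1 hω
    exact ⟨i, i', hne, hii'⟩
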